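/- Let C ⊆ F_q^n and C' ⊆ F_q^n be nonzero linear codes. For a linear code D ⊆ F_q^n, call a subset S ⊆ {1,…,n} D-independent if the family of linear functionals (π_j restricted to D)_{j ∈ S} is linearly independent in the dual space of D, where π_j denotes the j-th coordinate projection. Suppose there is a bijection φ : {1,…,n} → {1,…,n} such that, for every subset S ⊆ {1,…,n}, S is C-independent if and only if φ(S) is C'-independent. Then the minimum distance of C equals the minimum distance of C'. -/

import Mathlib

open scoped Classical

/-- The Hamming weight of a word in `F^n`. -/
noncomputable def hammingWeight {F : Type*} [Field F] {n : ℕ} (c : Fin n → F) : ℕ :=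
  (Finset.univ.filter fun j : Fin n => c j ≠ 0).card

/-- The minimum distance of a linear code: the smallest Hamming weight of a
nonzero codeword. -/
noncomputable def minDist {F : Type*} [Field F] {n : ℕ}
    (C : Submodule F (Fin n → F)) : ℕ :=
  sInf {w : ℕ | ∃ c ∈ C, c ≠ 0 ∧ hammingWeight c = w}

/-- A subset `S ⊆ {1,…,n}` is `D`-independent when the coordinate projections restricted
to `D`, for indices in `S`, are linearly independent in the dual space of `D`.  This is
the independence predicate of the matroid associated to the code `D`. -/
def coordIndep {F : Type*} [Field F] {n : ℕ} (D : Submodule F (Fin n → F))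
    (S : Finset (Fin n)) : Prop :=
  LinearIndependent F fun j : S => (LinearMap.proj (j : Fin n)).comp D.subtype

section Aux

variable {F : Type*} [Field F] {n : ℕ}

/-- The coordinate functionals on a code. -/
noncomputable def coordFun (D : Submodule F (Fin n → F)) (j : Fin n) :
    Module.Dual F ↥D :=
  (LinearMap.proj j).comp D.subtype

/-- The rank of a coordinate subset. -/
noncomputable def coordRk (D : Submodule F (Fin n → F)) (S : Finset (Fin n)) : ℕ :=
  Module.finrank F (Submodule.span F (coordFun D '' ↑S))

lemma card_le_coordRk {D : Submodule F (Fin n → F)} {B S : Finset (Fin n)}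
    (hBS : B ⊆ S) (hB : coordIndep D B) : B.card ≤ coordRk D S := by
  have hli : LinearIndependent F fun j : B => coordFun D j := hB
  have h1 : Module.finrank F (Submodule.span F (Set.range fun j : B => coordFun D j))
      = B.card := by
    rw [finrank_span_eq_card hli, Fintype.card_coe]
  have h2 : (Set.range fun j : B => coordFun D j) = coordFun D '' ↑B := by
    ext x; simp
  rw [← h1, h2]
  exact Submodule.finrank_mono (Submodule.span_mono (Set.image_mono hBS))

set_option maxHeartbeats 1000000 in
lemma exists_coordIndep_card_eq (D : Submodule F (Fin n → F)) (S : Finset (Fin n)) :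
    ∃ B ⊆ S, coordIndep D B ∧ B.card = coordRk D S := by
  obtain ⟨b, hbs, hspan, hli⟩ := exists_linearIndependent F (coordFun D '' ↑S)
  have hbfin : b.Finite := (S.finite_toSet.image _).subset hbs
  haveI : Fintype b := hbfin.fintype
  have hch : ∀ x : b, ∃ j, j ∈ S ∧ coordFun D j = (x : Module.Dual F ↥D) := by
    intro x
    rcases hbs x.2 with ⟨j, hj, hfj⟩
    exact ⟨j, hj, hfj⟩
  choose g hg1 hg2 using hch
  have hginj : Function.Injective g := by
    intro x y hxy
    apply Subtype.ext
    rw [← hg2 x, ← hg2 y, hxy]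
  refine ⟨Finset.univ.image g, ?_, ?_, ?_⟩
  · intro j hj
    rcases Finset.mem_image.mp hj with ⟨x, _, rfl⟩
    exact hg1 x
  · -- coordIndep D (image g univ)
    have hm : ∀ j : (Finset.univ.image g : Finset (Fin n)), (coordFun D j : Module.Dual F ↥D) ∈ b := by
      rintro ⟨j, hj⟩
      rcases Finset.mem_image.mp hj with ⟨x, _, rfl⟩
      rw [hg2 x]; exact x.2
    have hminj : Function.Injective fun j : (Finset.univ.image g : Finset (Fin n)) =>
        (⟨coordFun D j, hm j⟩ : b) := by
      intro j1 j2 h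
      have hval : coordFun D (j1 : Fin n) = coordFun D (j2 : Fin n) := congrArg Subtype.val h
      rcases Finset.mem_image.mp j1.2 with ⟨x1, _, he1⟩
      rcases Finset.mem_image.mp j2.2 with ⟨x2, _, he2⟩
      have hx : x1 = x2 := by
        apply Subtype.ext
        rw [← hg2 x1, ← hg2 x2, he1, he2, hval]
      apply Subtype.ext
      rw [← he1, ← he2, hx]
    show LinearIndependent F fun j : (Finset.univ.image g : Finset (Fin n)) => coordFun D j
    have h2 := hli.comp _ hminj
    have hfe : (((↑) : b → Module.Dual F ↥D) ∘ fun j : (Finset.univ.image g : Finset (Fin n)) => (⟨coordFun D j, hm j⟩ : b)) = fun j : (Finset.univ.image g : Finset (Fin n)) => coordFun D j := rfl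
    rw [hfe] at h2
    exact h2
  · have hcard : (Finset.univ.image g).card = Fintype.card b := by
      rw [Finset.card_image_of_injective _ hginj, Finset.card_univ]
    rw [hcard]
    have : Module.finrank F (Submodule.span F b) = Fintype.card b := by
      rw [finrank_span_set_eq_card hli, Set.toFinset_card]
    rw [coordRk, ← hspan, this]

lemma coordRk_eq_of_iso {C C' : Submodule F (Fin n → F)} (φ : Fin n ≃ Fin n)
    (hφ : ∀ S : Finset (Fin n), coordIndep C S ↔ coordIndep C' (S.image φ))
    (S : Finset (Fin n)) : coordRk C S = coordRk C' (S.image φ) := by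
  apply le_antisymm
  · obtain ⟨B, hBS, hBi, hBc⟩ := exists_coordIndep_card_eq C S
    rw [← hBc, ← Finset.card_image_of_injective B φ.injective]
    exact card_le_coordRk (Finset.image_subset_image hBS) ((hφ B).mp hBi)
  · obtain ⟨B, hBS, hBi, hBc⟩ := exists_coordIndep_card_eq C' (S.image φ)
    rw [← hBc]
    have hBi' : coordIndep C (B.image φ.symm) := by
      rw [hφ]
      have : (B.image φ.symm).image φ = B := by
        rw [Finset.image_image]
        simp
      rwa [this]
    have hsub : B.image φ.symm ⊆ S := by
      intro j hj
      rcases Finset.mem_image.mp hj with ⟨x, hx, rfl⟩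
      rcases Finset.mem_image.mp (hBS hx) with ⟨y, hy, rfl⟩
      simpa using hy
    calc B.card = (B.image φ.symm).card :=
          (Finset.card_image_of_injective B φ.symm.injective).symm
      _ ≤ coordRk C S := card_le_coordRk hsub hBi'

lemma coordRk_lt_iff (D : Submodule F (Fin n → F)) (S : Finset (Fin n)) :
    coordRk D S < Module.finrank F ↥D ↔
      ∃ c ∈ D, c ≠ 0 ∧ ∀ j ∈ S, c j = 0 := by
  set W := Submodule.span F (coordFun D '' ↑S) with hW
  have hfr : Module.finrank F (Module.Dual F ↥D) = Module.finrank F ↥D :=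
    Subspace.dual_finrank_eq
  have hco : (W.dualCoannihilator : Set ↥D) = {x | ∀ f ∈ coordFun D '' ↑S, f x = 0} :=
    Submodule.coe_dualCoannihilator_span _
  constructor
  · intro hlt
    have hWne : W ≠ ⊤ := by
      intro h
      rw [coordRk, ← hW, h, finrank_top, hfr] at hlt
      exact lt_irrefl _ hlt
    have hann : W.dualCoannihilator ≠ ⊥ := by
      intro h
      have := Subspace.dualCoannihilator_dualAnnihilator_eq (W := W)
      rw [h, Submodule.dualAnnihilator_bot] at this
      exact hWne this.symm
    obtain ⟨x, hx, hx0⟩ := Submodule.ne_bot_iff _ |>.mp hann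
    refine ⟨(x : Fin n → F), x.2, ?_, ?_⟩
    · intro h
      exact hx0 (Subtype.ext h)
    · intro j hj
      exact (Submodule.mem_dualCoannihilator x).mp hx (coordFun D j)
        (Submodule.subset_span ⟨j, by simpa using hj, rfl⟩)
  · rintro ⟨c, hcD, hc0, hcz⟩
    have hx : (⟨c, hcD⟩ : ↥D) ∈ W.dualCoannihilator := by
      have : (⟨c, hcD⟩ : ↥D) ∈ {x : ↥D | ∀ f ∈ coordFun D '' ↑S, f x = 0} := by
        rintro f ⟨j, hj, rfl⟩
        exact hcz j (by simpa using hj)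
      rw [← SetLike.mem_coe, hco]
      exact this
    have hWne : W ≠ ⊤ := by
      intro h
      rw [h] at hx
      have : (⟨c, hcD⟩ : ↥D) = 0 := by
        rw [← Module.forall_dual_apply_eq_zero_iff (R := F)]
        intro f
        exact (Submodule.mem_dualCoannihilator _).mp hx f Submodule.mem_top
      exact hc0 (congrArg Subtype.val this)
    calc coordRk D S < Module.finrank F (Module.Dual F ↥D) :=
          Submodule.finrank_lt (s := Submodule.span F (coordFun D '' ↑S)) (by rw [← hW]; exact hWne)
      _ = Module.finrank F ↥D := hfr

lemma exists_small_codeword {C C' : Submodule F (Fin n → F)} (φ : Fin n ≃ Fin n)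
    (hφ : ∀ S : Finset (Fin n), coordIndep C S ↔ coordIndep C' (S.image φ))
    {c : Fin n → F} (hcC : c ∈ C) (hc0 : c ≠ 0) :
    ∃ c' ∈ C', c' ≠ 0 ∧ hammingWeight c' ≤ hammingWeight c := by
  set T : Finset (Fin n) := Finset.univ.filter fun j => c j ≠ 0 with hT
  -- rank of complement is deficient for C
  have h1 : coordRk C Tᶜ < Module.finrank F ↥C := by
    rw [coordRk_lt_iff]
    refine ⟨c, hcC, hc0, fun j hj => ?_⟩
    have := Finset.mem_compl.mp hj
    by_contra h
    exact this (by simp [hT, h])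
  -- finranks of C and C' agree
  have hfr : Module.finrank F ↥C = Module.finrank F ↥C' := by
    have h2 : coordRk C Finset.univ = Module.finrank F ↥C := by
      by_contra h
      have hlt : coordRk C Finset.univ < Module.finrank F ↥C :=
        lt_of_le_of_ne (by
          have := Submodule.finrank_le (Submodule.span F (coordFun C '' ↑(Finset.univ : Finset (Fin n))))
          calc coordRk C Finset.univ ≤ Module.finrank F (Module.Dual F ↥C) := this
            _ = Module.finrank F ↥C := Subspace.dual_finrank_eq) h
      obtain ⟨x, hxC, hx0, hxz⟩ := (coordRk_lt_iff C Finset.univ).mp hlt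
      exact hx0 (funext fun j => hxz j (Finset.mem_univ j))
    have h2' : coordRk C' Finset.univ = Module.finrank F ↥C' := by
      by_contra h
      have hlt : coordRk C' Finset.univ < Module.finrank F ↥C' :=
        lt_of_le_of_ne (by
          have := Submodule.finrank_le (Submodule.span F (coordFun C' '' ↑(Finset.univ : Finset (Fin n))))
          calc coordRk C' Finset.univ ≤ Module.finrank F (Module.Dual F ↥C') := this
            _ = Module.finrank F ↥C' := Subspace.dual_finrank_eq) h
      obtain ⟨x, hxC, hx0, hxz⟩ := (coordRk_lt_iff C' Finset.univ).mp hlt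
      exact hx0 (funext fun j => hxz j (Finset.mem_univ j))
    rw [← h2, ← h2', coordRk_eq_of_iso φ hφ, Finset.image_univ_equiv]
  -- transfer
  have himg : Tᶜ.image φ = (T.image φ)ᶜ := by
    ext j
    simp only [Finset.mem_image, Finset.mem_compl]
    constructor
    · rintro ⟨x, hx, rfl⟩ ⟨y, hy, hxy⟩
      exact hx (φ.injective hxy ▸ hy)
    · intro h
      exact ⟨φ.symm j, fun hc => h ⟨φ.symm j, hc, by simp⟩, by simp⟩
  have h3 : coordRk C' (T.image φ)ᶜ < Module.finrank F ↥C' := by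
    rw [← himg, ← coordRk_eq_of_iso φ hφ, ← hfr]
    exact h1
  obtain ⟨c', hc'C, hc'0, hc'z⟩ := (coordRk_lt_iff C' (T.image φ)ᶜ).mp h3
  refine ⟨c', hc'C, hc'0, ?_⟩
  have hsupp : (Finset.univ.filter fun j => c' j ≠ 0) ⊆ T.image φ := by
    intro j hj
    by_contra h
    exact (Finset.mem_filter.mp hj).2 (hc'z j (Finset.mem_compl.mpr h))
  calc hammingWeight c' ≤ (T.image φ).card := Finset.card_le_card hsupp
    _ ≤ T.card := Finset.card_image_le
    _ = hammingWeight c := rfl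

end Aux

/-- if the matroids associated to two nonzero linear codes `C` and `C'` of
length `n` are isomorphic via a bijection `φ` of the coordinates, then `C` and `C'` have
the same minimum distance. -/
theorem minDist_eq_of_matroid_iso
    (F : Type*) [Field F] [Fintype F] (n : ℕ)
    (C C' : Submodule F (Fin n → F)) (hC : C ≠ ⊥) (hC' : C' ≠ ⊥)
    (φ : Fin n ≃ Fin n)
    (hφ : ∀ S : Finset (Fin n), coordIndep C S ↔ coordIndep C' (S.image φ)) :
    minDist C = minDist C' := by
  have hφ' : ∀ S : Finset (Fin n), coordIndep C' S ↔ coordIndep C (S.image φ.symm) := by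
    intro S
    rw [hφ (S.image φ.symm)]
    have : (S.image φ.symm).image φ = S := by
      rw [Finset.image_image]; simp
    rw [this]
  obtain ⟨c0, hc0C, hc00⟩ := Submodule.exists_mem_ne_zero_of_ne_bot hC
  obtain ⟨c0', hc0'C, hc0'0⟩ := Submodule.exists_mem_ne_zero_of_ne_bot hC'
  have hne : {w : ℕ | ∃ c ∈ C, c ≠ 0 ∧ hammingWeight c = w}.Nonempty :=
    ⟨hammingWeight c0, c0, hc0C, hc00, rfl⟩
  have hne' : {w : ℕ | ∃ c ∈ C', c ≠ 0 ∧ hammingWeight c = w}.Nonempty :=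
    ⟨hammingWeight c0', c0', hc0'C, hc0'0, rfl⟩
  apply le_antisymm
  · obtain ⟨c', hc'C, hc'0, hc'w⟩ := Nat.sInf_mem hne'
    obtain ⟨c, hcC, hc0, hcw⟩ := exists_small_codeword φ.symm hφ' hc'C hc'0
    calc minDist C ≤ hammingWeight c := Nat.sInf_le ⟨c, hcC, hc0, rfl⟩
      _ ≤ hammingWeight c' := hcw
      _ = minDist C' := hc'w
  · obtain ⟨c, hcC, hc0, hcw⟩ := Nat.sInf_mem hne
    obtain ⟨c', hc'C, hc'0, hc'w⟩ := exists_small_codeword φ hφ hcC hc0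
    calc minDist C' ≤ hammingWeight c' := Nat.sInf_le ⟨c', hc'C, hc'0, rfl⟩
      _ ≤ hammingWeight c := hc'w
      _ = minDist C := hcw
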